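/- Lemma 5.3 (second forbidden gap): there exist β* ∈ (π, 5) and u* ∈ (0,1) such that g(u*, β*) = 0, while g(u,β) > 0 for all u ∈ [0,1] and all β ∈ (π, β*). In particular, the equation g(u,β) = 0 has no roots u ∈ [0,1] for any β strictly between π and β*. -/

import Mathlib

/-!
For `π < β ≤ 3.15` the function `g(·, β)` is positive on `[0, 1]`. Near `u = 0` the oscillating
terms carry the small factors `u⁴`, `u⁶`. For `u ≥ 0.502` the phase `β/u - π` lies in `[0, π]`,
so after writing `cos (β/u) ≥ -1` the sinh-term is nonnegative, and once `u` is not too small it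
dominates the cosh-term; this is checked on finitely many strips with Taylor bounds for `exp`, and
near `u = 1` by a linearisation in `1 - u`. At `(u, β) = (1.96/π, 4.9)` the phase is `5π/2` and
`g < 0`. By compactness there is a lowest `β* ∈ (3.15, 4.9]` at which `g(·, β*)` takes a
nonpositive value on `[1/2, 1]`, and by the intermediate value theorem in `β` that value is a zero.
It is not at `u = 1`, since `g(1, β) = -2 sinh β sin β > 0` for `π < β < 2π`.
-/

/-- The function `g(u,β)` whose roots `u ∈ (0,1)` determine the spectral singularities of the
PT-symmetric waveguide with gain-and-loss amplitude `γ = β²/2`. (Note that for `u = 0` the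
formula evaluates to `1`, the limit value as `u → 0⁺`, since in Lean `β/0 = 0`.) -/
noncomputable def g (u β : ℝ) : ℝ :=
  u^4 * (1 - u^4) * Real.cosh (β * u) * Real.cos (β / u)
    - 2 * u^6 * Real.sinh (β * u) * Real.sin (β / u) + 1 - u^12

open Real Set Function

/- Fourth powers of the degree-5 Taylor polynomial of `exp` at `x / 4`, without and with the
remainder bound `(x/4)⁶/6! · 7/6` of `Real.exp_bound'`; they bound `exp x` for `0 ≤ x ≤ 4`. -/
noncomputable def expLower (x : ℝ) : ℝ := expNear 6 (x / 4) 0 ^ 4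

noncomputable def expUpper (x : ℝ) : ℝ := expNear 6 (x / 4) (7 / 6) ^ 4

section ExpBounds

variable {x y : ℝ}

theorem expLower_le_exp (hx : 0 ≤ x) : expLower x ≤ exp x := by
  have hsum : expNear 6 (x / 4) 0 = ∑ m ∈ Finset.range 6, (x / 4) ^ m / m.factorial := by
    simp [expNear]
  calc expLower x ≤ exp (x / 4) ^ 4 := by
        rw [expLower, hsum]
        exact pow_le_pow_left₀ (by positivity) (sum_le_exp_of_nonneg (by positivity) 6) 4
    _ = exp x := by rw [← exp_nat_mul]; ring_nf

theorem exp_le_expUpper (hx₀ : 0 ≤ x) (hx₄ : x ≤ 4) : exp x ≤ expUpper x := by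
  have hbound : exp (x / 4) ≤ expNear 6 (x / 4) (7 / 6) := by
    convert exp_bound' (x := x / 4) (by positivity) (by linarith) (n := 6) (by norm_num) using 1
    simp only [expNear]
    norm_num [Nat.factorial]
    ring
  calc exp x = exp (x / 4) ^ 4 := by rw [← exp_nat_mul]; ring_nf
    _ ≤ expUpper x := pow_le_pow_left₀ (exp_nonneg _) hbound 4

theorem cosh_le_expUpper (hx₀ : 0 ≤ x) (hxy : x ≤ y) (hy : y ≤ 4) :
    cosh x ≤ (expUpper y + 1) / 2 := by
  have hcosh : cosh x ≤ cosh y := by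
    rw [cosh_le_cosh, abs_of_nonneg hx₀, abs_of_nonneg (hx₀.trans hxy)]
    exact hxy
  have : exp (-y) ≤ 1 := exp_le_one_iff.mpr (by linarith)
  rw [cosh_eq y] at hcosh
  linarith [exp_le_expUpper (hx₀.trans hxy) hy]

theorem sinh_le_expUpper (hxy : x ≤ y) (hy₀ : 0 ≤ y) (hy : y ≤ 4) :
    sinh x ≤ expUpper y / 2 := by
  have hsinh : sinh x ≤ sinh y := sinh_le_sinh.mpr hxy
  rw [sinh_eq y] at hsinh
  linarith [exp_le_expUpper hy₀ hy, exp_pos (-y)]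

theorem expLower_le_sinh (hy : 0 ≤ y) (hyx : y ≤ x) : (expLower y - 1) / 2 ≤ sinh x := by
  have hsinh : sinh y ≤ sinh x := sinh_le_sinh.mpr hyx
  have : exp (-y) ≤ 1 := exp_le_one_iff.mpr (by linarith)
  rw [sinh_eq y] at hsinh
  linarith [expLower_le_exp hy]

end ExpBounds

theorem le_g {u : ℝ} (β : ℝ) (hu₀ : 0 ≤ u) (hu₁ : u ≤ 1) :
    1 - u ^ 12 - u ^ 4 * (1 - u ^ 4) * cosh (β * u) + 2 * u ^ 6 * sinh (β * u) * sin (β / u - π)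
      ≤ g u β := by
  have hA : 0 ≤ u ^ 4 * (1 - u ^ 4) * cosh (β * u) :=
    mul_nonneg (mul_nonneg (by positivity) (by nlinarith [pow_le_one₀ hu₀ hu₁ (n := 4)]))
      (cosh_pos _).le
  rw [g, sin_sub_pi]
  nlinarith [neg_one_le_cos (β / u)]

theorem g_pos_of_u_le {u β : ℝ} (hu₀ : 0 ≤ u) (hu : u ≤ 0.502) (hβ₀ : 0 ≤ β) (hβ : β ≤ 5) :
    0 < g u β := by
  have hβu₀ : 0 ≤ β * u := by positivity
  have hβu : β * u ≤ 2.51 := by nlinarith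
  have hpow (n : ℕ) : u ^ n ≤ 0.502 ^ n := pow_le_pow_left₀ hu₀ hu n
  have hcosh_term : u ^ 4 * (1 - u ^ 4) * cosh (β * u) ≤ 0.502 ^ 4 * ((expUpper 2.51 + 1) / 2) :=
    mul_le_mul (by nlinarith [hpow 4, pow_nonneg hu₀ 4]) (cosh_le_expUpper hβu₀ hβu (by norm_num))
      (cosh_pos _).le (by norm_num)
  have hsinh_term : 2 * u ^ 6 * sinh (β * u) ≤ 2 * 0.502 ^ 6 * (expUpper 2.51 / 2) :=
    mul_le_mul (by linarith [hpow 6]) (sinh_le_expUpper hβu (by norm_num) (by norm_num))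
      (sinh_nonneg_iff.mpr hβu₀) (by norm_num)
  have hsin_term : -(2 * u ^ 6 * sinh (β * u)) ≤ 2 * u ^ 6 * sinh (β * u) * sin (β / u - π) := by
    have : 0 ≤ 2 * u ^ 6 * sinh (β * u) := mul_nonneg (by positivity) (sinh_nonneg_iff.mpr hβu₀)
    nlinarith [neg_one_le_sin (β / u - π)]
  have hnum : 0 < 1 - 0.502 ^ 12 - 0.502 ^ 4 * ((expUpper 2.51 + 1) / 2)
      - 2 * 0.502 ^ 6 * (expUpper 2.51 / 2) := by
    norm_num [expUpper]
  linarith [le_g β hu₀ (by linarith), hpow 12]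

theorem g_pos_of_sin_ge {u₁ u₂ b s u β : ℝ} (hu₁ : 0 ≤ u₁) (hu₂ : u₂ ≤ 1) (hb : b * u₂ ≤ 4)
    (hs : 0 ≤ s) (hpos : 0 < 1 - u₂ ^ 12 - u₂ ^ 4 * (1 - u₁ ^ 4) * ((expUpper (b * u₂) + 1) / 2)
      + u₁ ^ 6 * (expLower (3.141592 * u₁) - 1) * s)
    (hu : u ∈ Icc u₁ u₂) (hβ : β ∈ Icc π b) (hsin : s ≤ sin (β / u - π)) : 0 < g u β := by
  have hβ₀ : 0 ≤ β := by linarith [hβ.1, pi_pos]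
  have hu₀ : 0 ≤ u := hu₁.trans hu.1
  have hu₁₁ : u₁ ^ 4 ≤ 1 := pow_le_one₀ hu₁ (hu.1.trans (hu.2.trans hu₂))
  have hβu₀ : 0 ≤ β * u := mul_nonneg hβ₀ hu₀
  have hcosh : cosh (β * u) ≤ (expUpper (b * u₂) + 1) / 2 :=
    cosh_le_expUpper hβu₀ (mul_le_mul hβ.2 hu.2 hu₀ (by linarith [hβ.1, hβ.2])) hb
  have hsinh : (expLower (3.141592 * u₁) - 1) / 2 ≤ sinh (β * u) :=
    expLower_le_sinh (by positivity) (mul_le_mul (by linarith [hβ.1, pi_gt_d6]) hu.1 hu₁ hβ₀)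
  have hsinh₀ : 0 ≤ sinh (β * u) := sinh_nonneg_iff.mpr hβu₀
  have hu₄ : u ^ 4 * (1 - u ^ 4) ≤ u₂ ^ 4 * (1 - u₁ ^ 4) :=
    mul_le_mul (pow_le_pow_left₀ hu₀ hu.2 4) (by linarith [pow_le_pow_left₀ hu₁ hu.1 4])
      (by nlinarith [pow_le_one₀ hu₀ (hu.2.trans hu₂) (n := 4)]) (by positivity)
  have hcosh_term : u ^ 4 * (1 - u ^ 4) * cosh (β * u)
      ≤ u₂ ^ 4 * (1 - u₁ ^ 4) * ((expUpper (b * u₂) + 1) / 2) :=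
    mul_le_mul hu₄ hcosh (cosh_pos _).le (mul_nonneg (by positivity) (by linarith))
  have hsin_term : u₁ ^ 6 * (expLower (3.141592 * u₁) - 1) * s
      ≤ 2 * u ^ 6 * sinh (β * u) * sin (β / u - π) := by
    have h₁ : u₁ ^ 6 * ((expLower (3.141592 * u₁) - 1) / 2) ≤ u ^ 6 * sinh (β * u) :=
      (mul_le_mul_of_nonneg_left hsinh (by positivity)).trans
        (mul_le_mul_of_nonneg_right (pow_le_pow_left₀ hu₁ hu.1 6) hsinh₀)
    have h₂ : 0 ≤ u ^ 6 * sinh (β * u) := mul_nonneg (by positivity) hsinh₀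
    nlinarith [mul_le_mul_of_nonneg_right h₁ hs, mul_le_mul_of_nonneg_left hsin h₂]
  linarith [le_g β hu₀ (hu.2.trans hu₂), pow_le_pow_left₀ hu₀ hu.2 12]

/- In the two strip lemmas `3.141592`, `4.712388` and `6.283184` are lower bounds for `π`, `3π/2`
and `2π`; they keep the side conditions decidable by `norm_num`. -/
theorem g_pos_of_strip_of_le_two_pi {u₁ u₂ b u β : ℝ} (hu : u ∈ Icc u₁ u₂) (hβ : β ∈ Icc π b)
    (hu₁ : b ≤ 6.283184 * u₁ := by norm_num) (hu₂ : u₂ ≤ 1 := by norm_num)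
    (hb : b * u₂ ≤ 4 := by norm_num)
    (hpos : 0 < 1 - u₂ ^ 12 - u₂ ^ 4 * (1 - u₁ ^ 4) * ((expUpper (b * u₂) + 1) / 2) := by
      norm_num [expUpper]) :
    0 < g u β := by
  have hπ := pi_gt_d6
  have hu₀ : 0 < u := by linarith [hu.1, hβ.1, hβ.2]
  refine g_pos_of_sin_ge (by linarith [hβ.1, hβ.2]) hu₂ hb le_rfl (by simpa using hpos) hu hβ
    (sin_nonneg_of_nonneg_of_le_pi ?_ ?_)
  · rw [sub_nonneg, le_div_iff₀ hu₀]
    nlinarith [hβ.1, hu.2]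
  · rw [sub_le_iff_le_add, div_le_iff₀ hu₀]
    nlinarith [hβ.2, hu.1, pi_gt_d6]

theorem g_pos_of_strip (c : ℝ) {u₁ u₂ b u β : ℝ} (hu : u ∈ Icc u₁ u₂) (hβ : β ∈ Icc π b)
    (hu₁ : b ≤ 4.712388 * u₁ := by norm_num) (hu₂ : u₂ ≤ 1 := by norm_num)
    (hb : b * u₂ ≤ 4 := by norm_num) (hc₀ : 0 < c := by norm_num)
    (hc : c * u₂ ≤ 3.141592 * (1 - u₂) := by norm_num)
    (hpos : 0 < 1 - u₂ ^ 12 - u₂ ^ 4 * (1 - u₁ ^ 4) * ((expUpper (b * u₂) + 1) / 2)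
      + u₁ ^ 6 * (expLower (3.141592 * u₁) - 1) * (c - c ^ 3 / 6) := by
      norm_num [expLower, expUpper]) :
    0 < g u β := by
  have hπ := pi_gt_d6
  have hu₁₀ : 0 < u₁ := by linarith [hβ.1, hβ.2]
  have hu₀ : 0 < u := hu₁₀.trans_le hu.1
  have hx_lo : c ≤ β / u - π := by
    rw [le_sub_iff_add_le, le_div_iff₀ hu₀]
    nlinarith [hβ.1, hu.2]
  have hx_hi : β / u - π ≤ π / 2 := by
    rw [sub_le_iff_le_add, div_le_iff₀ hu₀]
    nlinarith [hβ.2, hu.1]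
  have hsin : c - c ^ 3 / 6 ≤ sin (β / u - π) :=
    (sin_gt_sub_cube hc₀).le.trans <| sin_le_sin_of_le_of_le_pi_div_two (by linarith)
      hx_hi hx_lo
  have hc₂ : c ≤ 2 := by linarith [pi_lt_d6]
  refine g_pos_of_sin_ge hu₁₀.le hu₂ hb ?_ hpos hu hβ hsin
  nlinarith [mul_nonneg hc₀.le (by nlinarith : 0 ≤ 6 - c ^ 2)]

/- Near `u = 1` the phase satisfies `β/u - π ≥ (β - π) + π(1 - u)`, while the cosh-term is
`O(1 - u)`; the sinh-term wins because `18.2 π > 4 · 12.17`. -/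
theorem g_pos_of_u_ge {u β : ℝ} (hu : 0.98 ≤ u) (hu₁ : u ≤ 1) (hβ : π < β) (hβ' : β ≤ 3.15) :
    0 < g u β := by
  have hπ := pi_gt_d6
  have hu₀ : 0 < u := by linarith
  have hβ₀ : 0 < β := by linarith
  set x := β / u - π with hx
  have hx_lo : β - π * u ≤ x := by
    rw [hx, le_sub_iff_add_le, le_div_iff₀ hu₀]
    nlinarith [mul_nonneg (sub_nonneg.2 hu₁) (show 0 ≤ β - π * u by nlinarith)]
  have hx_hi : x ≤ 0.0727 := by
    rw [hx, sub_le_iff_le_add, div_le_iff₀ hu₀]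
    nlinarith
  have hx₀ : 0 < x := by nlinarith
  have hsin : 0.998 * x ≤ sin x := by
    have : x ^ 2 ≤ 0.0727 ^ 2 := pow_le_pow_left₀ hx₀.le hx_hi 2
    nlinarith [sin_gt_sub_cube hx₀, mul_le_mul_of_nonneg_left this hx₀.le]
  have hsinh : 10.35 ≤ sinh (β * u) :=
    le_trans (by norm_num [expLower]) (expLower_le_sinh (y := 3.141592 * 0.98) (by norm_num)
      (by nlinarith))
  have hcosh : cosh (β * u) ≤ 12.17 :=
    (cosh_le_expUpper (y := 3.15) (by positivity) (by nlinarith) (by norm_num)).trans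
      (by norm_num [expUpper])
  have hcosh_term : u ^ 4 * (1 - u ^ 4) * cosh (β * u) ≤ 4 * (1 - u) * 12.17 := by
    have : u ^ 4 * (1 - u ^ 4) ≤ 4 * (1 - u) := by
      nlinarith [pow_le_one₀ hu₀.le hu₁ (n := 2), pow_le_one₀ hu₀.le hu₁ (n := 3),
        pow_le_one₀ hu₀.le hu₁ (n := 4)]
    exact mul_le_mul this hcosh (cosh_pos _).le (by linarith)
  have hsin_term : 18.2 * x ≤ 2 * u ^ 6 * sinh (β * u) * sin x := by
    have h₆ : 2 * 0.98 ^ 6 * 10.35 ≤ 2 * u ^ 6 * sinh (β * u) :=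
      mul_le_mul (by linarith [pow_le_pow_left₀ (by norm_num) hu 6]) hsinh (by norm_num)
        (by positivity)
    nlinarith [mul_le_mul h₆ hsin (by linarith) (by linarith)]
  have hπu : 3.141592 * (1 - u) ≤ π * (1 - u) := mul_le_mul_of_nonneg_right hπ.le (by linarith)
  linarith [le_g β hu₀.le hu₁, pow_le_one₀ hu₀.le hu₁ (n := 12)]

theorem g_pos_of_beta_le {u β : ℝ} (hu₀ : 0 ≤ u) (hu₁ : u ≤ 1) (hβ : π < β) (hβ' : β ≤ 3.15) :
    0 < g u β := by
  -- each `c` is a rounded-down `π (1 - u₂) / u₂`, capped at `1`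
  have hβ'' : β ∈ Icc π 3.15 := ⟨hβ.le, hβ'⟩
  rcases le_or_gt u 0.502 with h₀ | h₀
  · exact g_pos_of_u_le hu₀ h₀ (by linarith [pi_pos]) (by linarith)
  rcases le_or_gt u 0.67 with h₁ | h₁
  · exact g_pos_of_strip_of_le_two_pi ⟨h₀.le, h₁⟩ hβ''
  rcases le_or_gt u 0.70 with h₂ | h₂
  · exact g_pos_of_strip 1 ⟨h₁.le, h₂⟩ hβ''
  rcases le_or_gt u 0.73 with h₃ | h₃
  · exact g_pos_of_strip 1 ⟨h₂.le, h₃⟩ hβ''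
  rcases le_or_gt u 0.76 with h₄ | h₄
  · exact g_pos_of_strip 0.992 ⟨h₃.le, h₄⟩ hβ''
  rcases le_or_gt u 0.79 with h₅ | h₅
  · exact g_pos_of_strip 0.8351 ⟨h₄.le, h₅⟩ hβ''
  rcases le_or_gt u 0.82 with h₆ | h₆
  · exact g_pos_of_strip 0.6896 ⟨h₅.le, h₆⟩ hβ''
  rcases le_or_gt u 0.85 with h₇ | h₇
  · exact g_pos_of_strip 0.5543 ⟨h₆.le, h₇⟩ hβ''
  rcases le_or_gt u 0.88 with h₈ | h₈
  · exact g_pos_of_strip 0.4283 ⟨h₇.le, h₈⟩ hβ''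
  rcases le_or_gt u 0.90 with h₉ | h₉
  · exact g_pos_of_strip 0.349 ⟨h₈.le, h₉⟩ hβ''
  rcases le_or_gt u 0.92 with h₁₀ | h₁₀
  · exact g_pos_of_strip 0.2731 ⟨h₉.le, h₁₀⟩ hβ''
  rcases le_or_gt u 0.94 with h₁₁ | h₁₁
  · exact g_pos_of_strip 0.2005 ⟨h₁₀.le, h₁₁⟩ hβ''
  rcases le_or_gt u 0.95 with h₁₂ | h₁₂
  · exact g_pos_of_strip 0.1653 ⟨h₁₁.le, h₁₂⟩ hβ''
  rcases le_or_gt u 0.96 with h₁₃ | h₁₃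
  · exact g_pos_of_strip 0.1308 ⟨h₁₂.le, h₁₃⟩ hβ''
  rcases le_or_gt u 0.97 with h₁₄ | h₁₄
  · exact g_pos_of_strip 0.0971 ⟨h₁₃.le, h₁₄⟩ hβ''
  rcases le_or_gt u 0.98 with h₁₅ | h₁₅
  · exact g_pos_of_strip 0.0641 ⟨h₁₄.le, h₁₅⟩ hβ''
  · exact g_pos_of_u_ge h₁₅.le hu₁ hβ hβ'

/- Here `4.9/u = 5π/2`, so `g = 1 - u¹² - 2u⁶ sinh (4.9 u)`. -/
theorem g_witness_neg : g (1.96 / π) 4.9 < 0 := by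
  have hπ := pi_lt_d6
  set u := 1.96 / π with hu
  have hu₀ : 0.6238 ≤ u := by rw [hu, le_div_iff₀ pi_pos]; linarith
  have hangle : 4.9 / u = 2 * π + π / 2 := by
    rw [hu]; field_simp; ring
  have hsinh : (expLower (4.9 * 0.6238) - 1) / 2 ≤ sinh (4.9 * u) :=
    expLower_le_sinh (by norm_num) (by linarith)
  have hnum : 1 < 2 * 0.6238 ^ 6 * ((expLower (4.9 * 0.6238) - 1) / 2) := by
    norm_num [expLower]
  have hsinh_term : 2 * 0.6238 ^ 6 * ((expLower (4.9 * 0.6238) - 1) / 2)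
      ≤ 2 * u ^ 6 * sinh (4.9 * u) :=
    mul_le_mul (by linarith [pow_le_pow_left₀ (by norm_num) hu₀ 6]) hsinh (by linarith)
      (by positivity)
  rw [g, hangle, cos_add_pi_div_two, sin_add_pi_div_two, cos_two_pi, sin_two_pi]
  nlinarith [pow_nonneg (by positivity : (0 : ℝ) ≤ u) 12]

theorem g_one_pos {β : ℝ} (hβ : π < β) (hβ' : β < 2 * π) : 0 < g 1 β := by
  have hsin : sin β < 0 := by
    rw [← sub_add_cancel β (2 * π), sin_add_two_pi]
    exact sin_neg_of_neg_of_neg_pi_lt (by linarith) (by linarith)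
  have hsinh : 0 < sinh β := sinh_pos_iff.mpr (by linarith [pi_pos])
  rw [g]
  norm_num
  nlinarith [mul_pos hsinh (neg_pos.mpr hsin)]

theorem continuousOn_uncurry_g : ContinuousOn (uncurry g) {p | p.1 ≠ 0} := by
  unfold g
  fun_prop (disch := aesop)

/- The lowest level `y` of the compact set `{f ≤ 0}` is a zero of `f x`, by the intermediate
value theorem on `[a, y]`. -/
theorem exists_lowest_zero {α : Type*} [TopologicalSpace α] {f : α → ℝ → ℝ} {s : Set α}
    {a b : ℝ} (hs : IsCompact s) (hf : ContinuousOn (uncurry f) (s ×ˢ Icc a b))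
    (ha : ∀ x ∈ s, 0 < f x a) (hneg : ∃ x ∈ s, ∃ y ∈ Icc a b, f x y ≤ 0) :
    ∃ x ∈ s, ∃ y ∈ Ioc a b, f x y = 0 ∧ ∀ x' ∈ s, ∀ y' ∈ Ico a y, 0 < f x' y' := by
  set K := s ×ˢ Icc a b ∩ uncurry f ⁻¹' Iic 0
  have hK : IsCompact K :=
    hf.lowerSemicontinuousOn.isCompact_inter_preimage_Iic (hs.prod isCompact_Icc) 0
  obtain ⟨x, hx, y, hy, hxy⟩ := hneg
  obtain ⟨⟨x₀, y₀⟩, ⟨⟨hx₀, hy₀⟩, hfp⟩, hmin⟩ :=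
    hK.exists_isMinOn ⟨(x, y), ⟨hx, hy⟩, hxy⟩ continuous_snd.continuousOn
  have hlowest : ∀ x' ∈ s, ∀ y' ∈ Icc a b, f x' y' ≤ 0 → y₀ ≤ y' :=
    fun x' hx' y' hy' h => hmin (a := (x', y')) ⟨⟨hx', hy'⟩, h⟩
  have hay₀ : a < y₀ := lt_of_le_of_ne hy₀.1 fun h => (ha x₀ hx₀).not_ge (h ▸ hfp)
  obtain ⟨y₁, hy₁, hzero⟩ : ∃ y₁ ∈ Icc a y₀, f x₀ y₁ = 0 := by
    refine intermediate_value_Icc' hy₀.1 ?_ ⟨hfp, (ha x₀ hx₀).le⟩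
    exact hf.comp (Continuous.prodMk_right x₀).continuousOn
      fun y (hy : y ∈ Icc a y₀) => ⟨hx₀, hy.1, hy.2.trans hy₀.2⟩
  have hy₁₀ : y₁ = y₀ :=
    le_antisymm hy₁.2 (hlowest x₀ hx₀ y₁ ⟨hy₁.1, hy₁.2.trans hy₀.2⟩ hzero.le)
  refine ⟨x₀, hx₀, y₀, ⟨hay₀, hy₀.2⟩, hy₁₀ ▸ hzero, fun x' hx' y' hy' => ?_⟩
  by_contra! h
  exact hy'.2.not_ge (hlowest x' hx' y' ⟨hy'.1, hy'.2.le.trans hy₀.2⟩ h)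

theorem stmt_19 :
    ∃ βs : ℝ, Real.pi < βs ∧ βs < 5 ∧
      ∃ us : ℝ, 0 < us ∧ us < 1 ∧ g us βs = 0 ∧
        ∀ u : ℝ, 0 ≤ u → u ≤ 1 → ∀ β : ℝ, Real.pi < β → β < βs → 0 < g u β := by
  have hπ := pi_gt_d6
  have hπ' := pi_lt_d6
  have hwitness : 1.96 / π ∈ Icc (1 / 2 : ℝ) 1 :=
    ⟨by rw [le_div_iff₀ pi_pos]; linarith, by rw [div_le_one pi_pos]; linarith⟩
  obtain ⟨us, hus, βs, hβs, hzero, hpos⟩ := exists_lowest_zero (f := g) isCompact_Icc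
    (continuousOn_uncurry_g.mono fun p hp => (show (0 : ℝ) < p.1 by linarith [hp.1.1]).ne')
    (fun u hu => g_pos_of_beta_le (by linarith [hu.1]) hu.2 (by linarith) le_rfl)
    ⟨_, hwitness, 4.9, ⟨by norm_num, le_rfl⟩, g_witness_neg.le⟩
  have hus₁ : us < 1 := hus.2.lt_of_ne fun h =>
    (g_one_pos (by linarith [hβs.1]) (by linarith [hβs.2])).ne' (h ▸ hzero)
  refine ⟨βs, by linarith [hβs.1], by linarith [hβs.2], us, by linarith [hus.1], hus₁, hzero,
    fun u hu₀ hu₁ β hβ hβ' => ?_⟩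
  rcases le_or_gt β 3.15 with h | h
  · exact g_pos_of_beta_le hu₀ hu₁ hβ h
  rcases le_or_gt u 0.502 with h' | h'
  · exact g_pos_of_u_le hu₀ h' (by linarith) (by linarith [hβs.2])
  · exact hpos u ⟨by linarith, hu₁⟩ β ⟨h.le, hβ'⟩
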